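/- arXiv:2112.02676 — 2 statements merged into one kernel-verified Lean document; each statement's English description precedes it below -/
import Mathlib

section
/- Let d ≥ 1, γ > 1, γ' = γ/(γ−1), C_H > 0, and let H : ℝ^d → ℝ be convex and differentiable with C_H^{-1}|p|^γ − C_H ≤ H(p) ≤ C_H(|p|^γ + 1) for all p ∈ ℝ^d. Then there exists a constant C_L > 0, depending only on C_H and γ, such that ⟨∇H(p), p⟩ − H(p) ≥ C_L^{-1}|∇H(p)|^{γ'} − C_L for all p ∈ ℝ^d. -/
open scoped RealInnerProductSpace

/-!
Convexity gives `⟪∇H p, r⟫ - H r ≤ ⟪∇H p, p⟫ - H p` for every `r`, so it suffices to exhibit one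
good test point. Take `r` in the direction of `q = ∇H p` with `‖r‖ ≤ s`: the upper growth bound
gives `⟪q, p⟫ - H p ≥ s‖q‖ - C_H s^γ - C_H`, and the choice `s ∝ ‖q‖^{1/(γ-1)}` turns
`s‖q‖ - C_H s^γ` into a fixed multiple of `‖q‖^{γ'}`.
-/

noncomputable section

/-- `ℝ^d` as a Euclidean space. -/
abbrev Euc (d : ℕ) := EuclideanSpace ℝ (Fin d)

/-- The growth condition `C_H⁻¹ |p|^γ - C_H ≤ H(p) ≤ C_H(|p|^γ + 1)` on all of `ℝ^d`. -/
def GrowthFull {d : ℕ} (CH γ : ℝ) (H : Euc d → ℝ) : Prop :=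
  ∀ p : Euc d, CH⁻¹ * ‖p‖ ^ γ - CH ≤ H p ∧ H p ≤ CH * (‖p‖ ^ γ + 1)

theorem ConvexOn.apply_sub_le_of_hasFDerivAt {E : Type*} [NormedAddCommGroup E] [NormedSpace ℝ E]
    {f : E → ℝ} {f' : E →L[ℝ] ℝ} {x : E} (hf : ConvexOn ℝ Set.univ f) (hf' : HasFDerivAt f f' x)
    (y : E) : f' (y - x) ≤ f y - f x := by
  have hline : ConvexOn ℝ Set.univ (f ∘ AffineMap.lineMap (k := ℝ) x y) := by
    simpa using hf.comp_affineMap (AffineMap.lineMap x y)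
  have hderiv : HasDerivAt (f ∘ AffineMap.lineMap (k := ℝ) x y) (f' (y - x)) 0 := 
    hf'.comp_hasDerivAt_of_eq 0 AffineMap.hasDerivAt_lineMap (by simp)
  simpa [slope] using hline.le_slope_of_hasDerivAt (Set.mem_univ 0) (Set.mem_univ 1) one_pos hderiv

theorem ConvexOn.inner_gradient_sub_le {E : Type*} [NormedAddCommGroup E] [InnerProductSpace ℝ E]
    [CompleteSpace E] {f : E → ℝ} {x : E} (hf : ConvexOn ℝ Set.univ f)
    (hfx : DifferentiableAt ℝ f x) (y : E) : ⟪gradient f x, y - x⟫ ≤ f y - f x :=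
  hf.apply_sub_le_of_hasFDerivAt hfx.hasGradientAt.hasFDerivAt y

theorem exists_norm_le_inner_eq {E : Type*} [NormedAddCommGroup E] [InnerProductSpace ℝ E]
    (q : E) {s : ℝ} (hs : 0 ≤ s) : ∃ r : E, ‖r‖ ≤ s ∧ ⟪q, r⟫ = s * ‖q‖ := by
  rcases eq_or_ne q 0 with rfl | hq
  · exact ⟨0, by simpa using hs, by simp⟩
  have hq' : 0 < ‖q‖ := norm_pos_iff.mpr hq
  refine ⟨(s / ‖q‖) • q, le_of_eq ?_, ?_⟩
  · rw [norm_smul, Real.norm_of_nonneg (by positivity)]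
    field_simp
  · rw [real_inner_smul_right, real_inner_self_eq_norm_sq]
    field_simp

theorem exists_rpow_conj_le_mul_sub_rpow {C γ : ℝ} (hC : 0 < C) (hγ : 1 < γ) :
    ∃ c > 0, ∀ a ≥ 0, ∃ s ≥ 0, c * a ^ (γ / (γ - 1)) ≤ s * a - C * s ^ γ := by
  have hγ1 : γ - 1 ≠ 0 := by linarith
  set t := (γ - 1)⁻¹
  -- `κ` is chosen so that `C κ^(γ-1) = 1/2`; then `s := κ a^(1/(γ-1))` gives
  -- `s a - C s^γ = (κ/2) a^γ'`.
  set κ := (2 * C) ^ (-t)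
  have hκ : 0 < κ := by positivity
  have hκγ : κ ^ γ = κ * (2 * C)⁻¹ := by
    rw [show γ = 1 + (γ - 1) by ring, Real.rpow_add hκ, Real.rpow_one,
      ← Real.rpow_mul (by positivity), show -t * (γ - 1) = -1 by rw [neg_mul, inv_mul_cancel₀ hγ1],
      Real.rpow_neg_one]
  refine ⟨κ / 2, by positivity, fun a ha => ⟨κ * a ^ t, by positivity, le_of_eq ?_⟩⟩
  have hlin : κ * a ^ t * a = κ * a ^ (γ / (γ - 1)) := by
    rw [mul_assoc, ← Real.rpow_add_one' ha (by positivity)]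
    congr 2
    simp only [t]
    field_simp
    ring
  have hpow : (κ * a ^ t) ^ γ = κ ^ γ * a ^ (γ / (γ - 1)) := by
    rw [Real.mul_rpow hκ.le (by positivity), ← Real.rpow_mul ha, inv_mul_eq_div]
  rw [hlin, hpow, hκγ]
  field_simp
  ring

theorem lagrangian_coercivity_general
    (d : ℕ) (γ CH : ℝ) (hγ : 1 < γ) (hCH : 0 < CH) :
    ∃ CL : ℝ, 0 < CL ∧ ∀ H : Euc d → ℝ,
      ConvexOn ℝ Set.univ H → Differentiable ℝ H → GrowthFull CH γ H →
      ∀ p : Euc d,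
        CL⁻¹ * ‖gradient H p‖ ^ (γ / (γ - 1)) - CL
          ≤ ⟪gradient H p, p⟫ - H p := by
  obtain ⟨c, hc, hconj⟩ := exists_rpow_conj_le_mul_sub_rpow hCH hγ
  refine ⟨max c⁻¹ CH, lt_max_of_lt_right hCH, fun H hconv hdiff hgrowth p => ?_⟩
  obtain ⟨s, hs, hsa⟩ := hconj ‖gradient H p‖ (norm_nonneg _)
  obtain ⟨r, hr, hinner⟩ := exists_norm_le_inner_eq (gradient H p) hs
  have hsub := hconv.inner_gradient_sub_le (hdiff p) r
  have hHr : H r ≤ CH * (s ^ γ + 1) :=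
    (hgrowth r).2.trans (by gcongr)
  have hCL : (max c⁻¹ CH)⁻¹ * ‖gradient H p‖ ^ (γ / (γ - 1))
      ≤ c * ‖gradient H p‖ ^ (γ / (γ - 1)) := by
    gcongr
    exact inv_le_of_inv_le₀ hc (le_max_left _ _)
  rw [inner_sub_right, hinner] at hsub
  linarith [le_max_right c⁻¹ CH]

/-- coercivity of the Lagrangian along `ν = ∇H(p)`. -/
theorem lagrangian_coercivity
    (d : ℕ) (γ CH : ℝ) (hd : 1 ≤ d) (hγ : 1 < γ) (hCH : 0 < CH) :
    ∃ CL : ℝ, 0 < CL ∧ ∀ H : Euc d → ℝ,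
      ConvexOn ℝ Set.univ H → Differentiable ℝ H → GrowthFull CH γ H →
      ∀ p : Euc d,
        CL⁻¹ * ‖gradient H p‖ ^ (γ / (γ - 1)) - CL
          ≤ ⟪gradient H p, p⟫ - H p :=
  lagrangian_coercivity_general d γ CH hγ hCH

end
end

section
/- Let d ≥ 1, γ > 1, C_H > 0, and let H : ℝ^d → ℝ be convex and differentiable with C_H^{-1}|p|^γ − C_H ≤ H(p) ≤ C_H(|p|^γ + 1) for all p ∈ ℝ^d. Then there exists a constant C̃ > 0, depending only on C_H and γ, such that |∇H(p)| ≤ C̃(|p|^{γ−1} + 1) for all p ∈ ℝ^d. -/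
/-!
Convexity gives the supporting-hyperplane inequality `H p + ⟪∇H p, v⟫ ≤ H (p + v)`. Taking `v`
in the direction of `∇H p` with `‖v‖ = r := max ‖p‖ 1` yields
`r ‖∇H p‖ ≤ sup_{B(p, r)} H - H p ≤ C_H ((2r)^γ + 1) + C_H`, and dividing by `r ≥ 1` leaves
`‖∇H p‖ ≤ C_H 2^γ r^(γ-1) + 2 C_H`.
-/

open scoped RealInnerProductSpace

noncomputable section

open Set Metric

theorem ConvexOn.hasFDerivAt_le_sub {E : Type*} [NormedAddCommGroup E] [NormedSpace ℝ E]
    {f : E → ℝ} {f' : E →L[ℝ] ℝ} {s : Set E} {x v : E} (hf : ConvexOn ℝ s f)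
    (hx : x ∈ s) (hxv : x + v ∈ s) (hf' : HasFDerivAt f f' x) :
    f' v ≤ f (x + v) - f x := by
  set ℓ : ℝ →ᵃ[ℝ] E := AffineMap.lineMap x (x + v)
  have hℓ : ∀ t : ℝ, ℓ t = x + t • v := fun t => by
    simp [ℓ, AffineMap.lineMap_apply, add_comm]
  have hconv : ConvexOn ℝ (ℓ ⁻¹' s) (f ∘ ℓ) := hf.comp_affineMap ℓ
  have hderiv : HasDerivAt (f ∘ ℓ) (f' v) 0 := by
    have hline : HasDerivAt ℓ v 0 := by
      simpa [funext hℓ] using ((hasDerivAt_id (0 : ℝ)).smul_const v).const_add x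
    exact (by simpa [hℓ] using hf' : HasFDerivAt f f' (ℓ 0)).comp_hasDerivAt 0 hline
  simpa [slope_def_field, hℓ] using
    hconv.le_slope_of_hasDerivAt (by simpa [hℓ]) (by simpa [hℓ]) one_pos hderiv

theorem ConvexOn.mul_norm_gradient_le {E : Type*} [NormedAddCommGroup E]
    [InnerProductSpace ℝ E] [CompleteSpace E] {f : E → ℝ} {s : Set E} {x : E} {r M : ℝ}
    (hf : ConvexOn ℝ s f) (hfx : DifferentiableAt ℝ f x) (hr : 0 ≤ r)
    (hball : closedBall x r ⊆ s) (hM : ∀ y ∈ closedBall x r, f y ≤ M) :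
    r * ‖gradient f x‖ ≤ M - f x := by
  set g := gradient f x
  by_cases hg : g = 0
  · simpa [hg] using hM x (mem_closedBall_self hr)
  set v : E := (r / ‖g‖) • g
  have hv : ‖v‖ = r := by
    simp [v, norm_smul, abs_of_nonneg hr, hg]
  have hxv : x + v ∈ closedBall x r := by simp [hv]
  have hinner : ⟪g, v⟫ = r * ‖g‖ := by
    have : ‖g‖ ≠ 0 := norm_ne_zero_iff.mpr hg
    rw [real_inner_smul_right, real_inner_self_eq_norm_sq]
    field_simp
  have hsupport := hf.hasFDerivAt_le_sub (hball (mem_closedBall_self hr)) (hball hxv)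
    hfx.hasGradientAt.hasFDerivAt
  rw [InnerProductSpace.toDual_apply_apply, hinner] at hsupport
  linarith [hM _ hxv]

theorem max_one_rpow_le_rpow_add_one {a : ℝ} (ha : 0 ≤ a) (q : ℝ) :
    max a 1 ^ q ≤ a ^ q + 1 := by
  rcases le_total a 1 with h | h
  · simp [max_eq_right h, Real.rpow_nonneg ha]
  · simp [max_eq_left h]

theorem GrowthFull.le_of_norm_le {d : ℕ} {CH γ R : ℝ} {H : Euc d → ℝ} (hH : GrowthFull CH γ H)
    (hCH : 0 ≤ CH) (hγ : 0 ≤ γ) {q : Euc d} (hq : ‖q‖ ≤ R) : H q ≤ CH * (R ^ γ + 1) :=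
  (hH q).2.trans (by gcongr)

theorem GrowthFull.neg_le {d : ℕ} {CH γ : ℝ} {H : Euc d → ℝ} (hH : GrowthFull CH γ H)
    (hCH : 0 ≤ CH) (p : Euc d) : -CH ≤ H p := by
  have : 0 ≤ CH⁻¹ * ‖p‖ ^ γ := by positivity
  linarith [(hH p).1]

theorem gradient_growth_bound_general
    (d : ℕ) (γ CH : ℝ) (hγ : 1 < γ) (hCH : 0 < CH) :
    ∃ Ctil : ℝ, 0 < Ctil ∧ ∀ H : Euc d → ℝ,
      ConvexOn ℝ Set.univ H → Differentiable ℝ H → GrowthFull CH γ H →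
      ∀ p : Euc d, ‖gradient H p‖ ≤ Ctil * (‖p‖ ^ (γ - 1) + 1) := by
  refine ⟨CH * 2 ^ γ + 2 * CH, by positivity, fun H hconv hdiff hgrowth p => ?_⟩
  set r := max ‖p‖ 1
  have hr : 1 ≤ r := le_max_right _ _
  have hball : ∀ q ∈ closedBall p r, H q ≤ CH * ((2 * r) ^ γ + 1) := fun q hq =>
    hgrowth.le_of_norm_le hCH.le (by linarith) (by
      linarith [norm_le_norm_add_norm_sub' q p, mem_closedBall_iff_norm.mp hq, le_max_left ‖p‖ 1])
  have hkey : r * ‖gradient H p‖ ≤ CH * 2 ^ γ * r ^ γ + 2 * CH := by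
    have := hconv.mul_norm_gradient_le (hdiff p) (by positivity) (subset_univ _) hball
    rw [Real.mul_rpow zero_le_two (by positivity)] at this
    linarith [hgrowth.neg_le hCH.le p]
  have hdiv : ‖gradient H p‖ ≤ CH * 2 ^ γ * r ^ (γ - 1) + 2 * CH := by
    have hrγ : r ^ γ = r * r ^ (γ - 1) := by
      rw [Real.rpow_sub_one (by positivity)]
      field_simp
    refine le_of_mul_le_mul_left (hkey.trans ?_) (by positivity : 0 < r)
    have : 2 * CH * 1 ≤ 2 * CH * r := mul_le_mul_of_nonneg_left hr (by positivity)
    rw [hrγ]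
    linarith
  have hA : 0 ≤ ‖p‖ ^ (γ - 1) := by positivity
  calc ‖gradient H p‖ ≤ CH * 2 ^ γ * r ^ (γ - 1) + 2 * CH := hdiv
    _ ≤ CH * 2 ^ γ * (‖p‖ ^ (γ - 1) + 1) + 2 * CH * (‖p‖ ^ (γ - 1) + 1) := by
      gcongr ?_ + ?_
      · gcongr
        exact max_one_rpow_le_rpow_add_one (norm_nonneg p) _
      · exact le_mul_of_one_le_right (by positivity) (by linarith)
    _ = (CH * 2 ^ γ + 2 * CH) * (‖p‖ ^ (γ - 1) + 1) := by ring

/-- gradient growth bound `|∇H(p)| ≤ C̃ (|p|^{γ-1} + 1)`. -/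
theorem gradient_growth_bound
    (d : ℕ) (γ CH : ℝ) (hd : 1 ≤ d) (hγ : 1 < γ) (hCH : 0 < CH) :
    ∃ Ctil : ℝ, 0 < Ctil ∧ ∀ H : Euc d → ℝ,
      ConvexOn ℝ Set.univ H → Differentiable ℝ H → GrowthFull CH γ H →
      ∀ p : Euc d, ‖gradient H p‖ ≤ Ctil * (‖p‖ ^ (γ - 1) + 1) :=
  gradient_growth_bound_general d γ CH hγ hCH
end
end
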